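/- Let n ≥ 3. The set {L_h ∘ d : h ∈ Sym_n, d ∈ D_{n+1}} of maps from Sym_n to Sym_n is a subgroup of the symmetric group on the set Sym_n, and this subgroup is isomorphic to the direct product of the symmetric group Sym_{n+1} on n+1 letters by a cyclic group of order 2. -/

import Mathlib

open Fin.NatCast

theorem Equiv.Perm.inv_apply_self {α : Type*} (f : Equiv.Perm α) (x : α) : f⁻¹ (f x) = x :=
  f.symm_apply_apply x

theorem Equiv.Perm.apply_inv_self {α : Type*} (f : Equiv.Perm α) (x : α) : f (f⁻¹ x) = x :=
  f.apply_symm_apply x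

def ext0 {n : ℕ} (π : Equiv.Perm (Fin n)) : Equiv.Perm (Fin (n + 1)) where
  toFun x := Fin.cases 0 (fun t => (π t).succ) x
  invFun x := Fin.cases 0 (fun t => (π⁻¹ t).succ) x
  left_inv x := by
    cases x using Fin.cases with
    | zero => simp
    | succ t => simp
  right_inv x := by
    cases x using Fin.cases with
    | zero => simp
    | succ t => simp

theorem ext0_zero {n : ℕ} (π : Equiv.Perm (Fin n)) : ext0 π 0 = 0 := by
  simp [ext0]

theorem finRotate_pow_apply {n : ℕ} (m : ℕ) (x : Fin (n + 1)) :
    ((finRotate (n + 1)) ^ m) x = x + (m : Fin (n + 1)) := by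
  induction m with
  | zero => simp
  | succ m ih =>
      rw [pow_succ', Equiv.Perm.mul_apply, finRotate_succ_apply, ih]
      push_cast
      abel

/-- The auxiliary permutation `α^(n+1-r) ∘ [0 π] ∘ α^(π⁻¹(r))` of `{0,1,…,n}`. -/
def toricAux (n r : ℕ) (π : Equiv.Perm (Fin n)) : Equiv.Perm (Fin (n + 1)) :=
  (finRotate (n + 1)) ^ (n + 1 - r) * ext0 π *
    (finRotate (n + 1)) ^ (((ext0 π)⁻¹ (r : Fin (n + 1))) : ℕ)

theorem toricAux_apply_zero (n r : ℕ) (hr : r ≤ n) (π : Equiv.Perm (Fin n)) :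
    toricAux n r π 0 = 0 := by
  unfold toricAux
  have h : r + (n + 1 - r) = n + 1 := by omega
  rw [Equiv.Perm.mul_apply, Equiv.Perm.mul_apply, finRotate_pow_apply,
    finRotate_pow_apply, zero_add, Fin.cast_val_eq_self,
    Equiv.Perm.apply_inv_self, ← Nat.cast_add, h, Fin.natCast_self]

/-- Restriction of a permutation of `{0,1,…,n}` fixing `0` to a permutation of `{1,…,n}`. -/
def unext0 {n : ℕ} (τ : Equiv.Perm (Fin (n + 1))) (h : τ 0 = 0) : Equiv.Perm (Fin n) where
  toFun t := (τ t.succ).pred (by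
    intro hc
    exact Fin.succ_ne_zero t (τ.injective (hc.trans h.symm)))
  invFun t := (τ⁻¹ t.succ).pred (by
    intro hc
    have h' : τ⁻¹ 0 = 0 := by
      conv_lhs => rw [← h]
      exact Equiv.Perm.inv_apply_self τ 0
    exact Fin.succ_ne_zero t (τ⁻¹.injective (hc.trans h'.symm)))
  left_inv t := by
    apply Fin.succ_injective
    rw [Fin.succ_pred, Fin.succ_pred, Equiv.Perm.inv_apply_self]
  right_inv t := by
    apply Fin.succ_injective
    rw [Fin.succ_pred, Fin.succ_pred, Equiv.Perm.apply_inv_self]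

/-- The toric map `f̄_r` on `Sym_n`. -/
def toricMap (n r : ℕ) (hr : r ≤ n) (π : Equiv.Perm (Fin n)) : Equiv.Perm (Fin n) :=
  unext0 (toricAux n r π) (toricAux_apply_zero n r hr π)

/-- The reversal `w : t ↦ n+1-t` of `{1,…,n}`, in the `Fin n` encoding. -/
def wrev (n : ℕ) : Equiv.Perm (Fin n) where
  toFun t := ⟨n - 1 - t.val, by have := t.isLt; omega⟩
  invFun t := ⟨n - 1 - t.val, by have := t.isLt; omega⟩
  left_inv t := by
    have := t.isLt
    apply Fin.ext
    simp only
    omega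
  right_inv t := by
    have := t.isLt
    apply Fin.ext
    simp only
    omega

theorem wrev_wrev {n : ℕ} (t : Fin n) : wrev n (wrev n t) = t := by
  have := t.isLt
  apply Fin.ext
  simp only [wrev, Equiv.coe_fn_mk]
  omega

/-- The reverse map `g` on `Sym_n`: `g(π) = w ∘ π ∘ w`,
i.e. `(g π)(t) = n+1-π(n+1-t)` in 1-based notation. -/
def revMap {n : ℕ} (π : Equiv.Perm (Fin n)) : Equiv.Perm (Fin n) :=
  wrev n * π * wrev n

theorem revMap_revMap {n : ℕ} (π : Equiv.Perm (Fin n)) : revMap (revMap π) = π := by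
  ext t
  simp only [revMap, Equiv.Perm.mul_apply]
  rw [wrev_wrev, wrev_wrev]

theorem ext0_injective {n : ℕ} : Function.Injective (ext0 (n := n)) := by
  intro π1 π2 h
  ext t
  have h2 : ext0 π1 t.succ = ext0 π2 t.succ := by rw [h]
  simp only [ext0, Equiv.coe_fn_mk, Fin.cases_succ] at h2
  exact congrArg Fin.val (Fin.succ_injective _ h2)

theorem unext0_inj {n : ℕ} {τ1 τ2 : Equiv.Perm (Fin (n + 1))} {h1 : τ1 0 = 0}
    {h2 : τ2 0 = 0} (h : unext0 τ1 h1 = unext0 τ2 h2) : τ1 = τ2 := by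
  ext x
  cases x using Fin.cases with
  | zero => rw [h1, h2]
  | succ t =>
      have hfun : (unext0 τ1 h1) t = (unext0 τ2 h2) t := by rw [h]
      have hne1 : τ1 t.succ ≠ 0 := fun hc => Fin.succ_ne_zero t (τ1.injective (hc.trans h1.symm))
      have hne2 : τ2 t.succ ≠ 0 := fun hc => Fin.succ_ne_zero t (τ2.injective (hc.trans h2.symm))
      have e1 : ((unext0 τ1 h1) t).succ = τ1 t.succ := by
        show ((τ1 t.succ).pred hne1).succ = τ1 t.succ
        exact Fin.succ_pred _ _
      have e2 : ((unext0 τ2 h2) t).succ = τ2 t.succ := by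
        show ((τ2 t.succ).pred hne2).succ = τ2 t.succ
        exact Fin.succ_pred _ _
      rw [← e1, ← e2, hfun]

theorem toricMap_injective (n r : ℕ) (hr : r ≤ n) :
    Function.Injective (toricMap n r hr) := by
  intro π1 π2 h
  have h' : toricAux n r π1 = toricAux n r π2 := unext0_inj h
  unfold toricAux at h'
  rw [mul_assoc, mul_assoc] at h'
  have h'' := mul_left_cancel h'
  set c1 : ℕ := (((ext0 π1)⁻¹ (r : Fin (n + 1))) : ℕ) with hc1
  set c2 : ℕ := (((ext0 π2)⁻¹ (r : Fin (n + 1))) : ℕ) with hc2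
  have happ := congrArg (fun (e : Equiv.Perm (Fin (n + 1))) => e (-(c1 : Fin (n + 1)))) h''
  simp only [Equiv.Perm.mul_apply, finRotate_pow_apply] at happ
  rw [neg_add_cancel, ext0_zero] at happ
  have hz : (-(c1 : Fin (n + 1)) + (c2 : Fin (n + 1))) = 0 :=
    (ext0 π2).injective (by rw [← happ, ext0_zero])
  have hcc : (c1 : Fin (n + 1)) = (c2 : Fin (n + 1)) := by
    have := neg_add_eq_zero.mp hz
    exact this
  have hpow : (finRotate (n + 1)) ^ c1 = (finRotate (n + 1)) ^ c2 := by
    ext x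
    rw [finRotate_pow_apply, finRotate_pow_apply, hcc]
  rw [hpow] at h''
  exact ext0_injective (mul_right_cancel h'')

/-- The toric map `f̄ = f̄_1` as a permutation of the set `Sym_n`. -/
noncomputable def toricEquiv (n : ℕ) (hn : 1 ≤ n) : Equiv.Perm (Equiv.Perm (Fin n)) :=
  Equiv.ofBijective (toricMap n 1 hn)
    (Finite.injective_iff_bijective.mp (toricMap_injective n 1 hn))

/-- The reverse map `g` as a permutation of the set `Sym_n`. -/
def revEquiv (n : ℕ) : Equiv.Perm (Equiv.Perm (Fin n)) where
  toFun := revMap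
  invFun := revMap
  left_inv := revMap_revMap
  right_inv := revMap_revMap

/-- The toric-reverse group `D_{n+1}`: the group of permutations of the set `Sym_n`
generated by the toric map `f̄` and the reverse map `g`. -/
def toricReverseGroup (n : ℕ) (hn : 1 ≤ n) :
    Subgroup (Equiv.Perm (Equiv.Perm (Fin n))) :=
  Subgroup.closure {toricEquiv n hn, revEquiv n}

/-- The automorphism group of a simple graph, as a subgroup of the group of
permutations of its vertex set. -/
def graphAut {V : Type*} (G : SimpleGraph V) : Subgroup (Equiv.Perm V) where
  carrier := {e | ∀ u v, G.Adj (e u) (e v) ↔ G.Adj u v}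
  one_mem' := by intro u v; simp
  mul_mem' := by
    intro a b ha hb u v
    rw [Equiv.Perm.mul_apply, Equiv.Perm.mul_apply, ha, hb]
  inv_mem' := by
    intro a ha u v
    conv_rhs => rw [← Equiv.Perm.apply_inv_self a u, ← Equiv.Perm.apply_inv_self a v]
    rw [ha]

/-!
Identify `Sym_n` with the left cosets of `C = ⟨α⟩` in `Sym_{n+1}` through `π ↦ [0 π] C`: each
coset contains exactly one permutation fixing `0`. Left multiplication on cosets is an action `φ`
of `Sym_{n+1}` on `Sym_n`, and right multiplication by the reflection `w : x ↦ -x`, which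
normalizes `C`, is an involution `B` commuting with it. In these terms `L_h = φ([0 h])`,
`f̄ = φ(α)⁻¹` and `g = φ(w) B`, so the maps `L_h ∘ d` are exactly the image of `(σ, ε) ↦ φ(σ) Bᵋ` on
`Sym_{n+1} × C₂`. For `n ≥ 3` this map is injective: the kernel of `φ` is the normal core of `C`,
trivial because a suitable transposition conjugates any nontrivial translation of `ℤ/(n+1)` to a
non-translation; and `φ(σ) B = 1` would make `σ` central in `Sym_{n+1}`.
-/

open Equiv Equiv.Perm

theorem Finset.exists_notMem_of_card_lt_card_univ {α : Type*} [Fintype α] {s : Finset α}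
    (h : s.card < Fintype.card α) : ∃ x, x ∉ s := by
  obtain ⟨x, -, hx⟩ := Finset.exists_mem_notMem_of_card_lt_card (s := s) (t := Finset.univ)
    (by rwa [Finset.card_univ])
  exact ⟨x, hx⟩

theorem Equiv.Perm.eq_one_of_forall_commute {α : Type*} [Fintype α] [DecidableEq α]
    (hα : 2 < Fintype.card α) {σ : Perm α} (hσ : ∀ τ, Commute σ τ) : σ = 1 := by
  refine Equiv.ext fun a => ?_
  by_contra ha
  rw [Perm.one_apply] at ha
  obtain ⟨b, hb⟩ := Finset.exists_notMem_of_card_lt_card_univ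
    ((Finset.card_le_two (a := a) (b := σ a)).trans_lt hα)
  simp only [Finset.mem_insert, Finset.mem_singleton, not_or] at hb
  have key := congrArg (· a) (hσ (swap a b)).eq
  simp only [Perm.mul_apply, swap_apply_left] at key
  rw [swap_apply_of_ne_of_ne ha (Ne.symm hb.2)] at key
  exact hb.1 (σ.injective key)

theorem Equiv.neg_mul_self (α : Type*) [InvolutiveNeg α] :
    (Equiv.neg α : Perm α) * Equiv.neg α = 1 :=
  Equiv.ext neg_neg

def zmodTwoHom {M : Type*} [Group M] (x : M) (hx : x * x = 1) : Multiplicative (ZMod 2) →* M :=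
  AddMonoidHom.toMultiplicativeLeft <| ZMod.lift 2
    ⟨zmultiplesHom (Additive M) (Additive.ofMul x), by
      simpa [two_zsmul] using congrArg Additive.ofMul hx⟩

theorem zmodTwoHom_ofAdd_one {M : Type*} [Group M] (x : M) (hx : x * x = 1) :
    zmodTwoHom x hx (Multiplicative.ofAdd 1) = x := by
  simp only [zmodTwoHom, AddMonoidHom.toMultiplicativeLeft_apply_apply, toAdd_ofAdd]
  rw [← Int.cast_one (R := ZMod 2), ZMod.lift_coe]
  simp

theorem Multiplicative.zmod_two_eq_one_or_ofAdd_one (ε : Multiplicative (ZMod 2)) :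
    ε = 1 ∨ ε = Multiplicative.ofAdd 1 := by
  revert ε; decide

theorem Fin.two_mul_val_of_add_self_eq_zero {n : ℕ} {a : Fin (n + 1)} (ha : a + a = 0)
    (ha0 : a ≠ 0) : 2 * a.val = n + 1 := by
  have hdvd : n + 1 ∣ a.val + a.val := by
    rw [Nat.dvd_iff_mod_eq_zero, ← Fin.val_add, ha, Fin.val_zero]
  have hpos : a.val ≠ 0 := Fin.val_ne_iff.mpr ha0
  have := Nat.eq_of_dvd_of_lt_two_mul (by omega) hdvd (by omega)
  omega

theorem Fin.eq_of_add_self_eq_zero {n : ℕ} {a b : Fin (n + 1)} (ha : a + a = 0) (hb : b + b = 0)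
    (ha0 : a ≠ 0) (hb0 : b ≠ 0) : a = b := by
  have := Fin.two_mul_val_of_add_self_eq_zero ha ha0
  have := Fin.two_mul_val_of_add_self_eq_zero hb hb0
  exact Fin.ext (by omega)

theorem Fin.eq_zero_of_forall_perm_conj_translate {n : ℕ} (hn : 3 ≤ n) {c : Fin (n + 1)}
    (h : ∀ τ : Perm (Fin (n + 1)), ∃ d, ∀ x, τ (x + c) = τ x + d) : c = 0 := by
  by_contra hc
  have hcard : ∀ s : Finset (Fin (n + 1)), s.card ≤ 3 → ∃ x, x ∉ s := fun s hs =>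
    Finset.exists_notMem_of_card_lt_card_univ (by rw [Fintype.card_fin]; omega)
  -- conjugating by `swap 0 c`, the shift is `-c` at `0` but `c` away from `0, ±c`
  have hcc : c + c = 0 := by
    obtain ⟨x, hx⟩ := hcard {0, c, -c} Finset.card_le_three
    simp only [Finset.mem_insert, Finset.mem_singleton, not_or] at hx
    obtain ⟨d, hd⟩ := h (swap 0 c)
    have h0 := hd 0
    have h1 := hd x
    rw [zero_add, swap_apply_right, swap_apply_left] at h0
    rw [swap_apply_of_ne_of_ne hx.1 hx.2.1,
      swap_apply_of_ne_of_ne (fun e => hx.2.2 (eq_neg_of_add_eq_zero_left e))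
        (fun e => hx.1 (by simpa using e))] at h1
    rw [← add_left_cancel h1] at h0
    exact h0.symm
  -- then conjugating by `swap c u` forces `u + u = 0`, yet `c` is the only element of order two
  obtain ⟨u, hu⟩ := hcard {0, c} (Finset.card_le_two.trans (by norm_num))
  simp only [Finset.mem_insert, Finset.mem_singleton, not_or] at hu
  obtain ⟨d, hd⟩ := h (swap c u)
  have h0 := hd 0
  have h1 := hd c
  rw [zero_add, swap_apply_left, swap_apply_of_ne_of_ne (Ne.symm hc) (Ne.symm hu.1),
    zero_add] at h0
  rw [hcc, swap_apply_left, swap_apply_of_ne_of_ne (Ne.symm hc) (Ne.symm hu.1), ← h0] at h1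
  exact hu.2 (Fin.eq_of_add_self_eq_zero h1.symm hcc hu.1 hc)

def rotations (n : ℕ) : Subgroup (Perm (Fin (n + 1))) :=
  Subgroup.zpowers (finRotate (n + 1))

theorem mem_rotations_iff {n : ℕ} {τ : Perm (Fin (n + 1))} :
    τ ∈ rotations n ↔ ∃ c, ∀ x, τ x = x + c := by
  constructor
  · intro h
    obtain ⟨m, rfl⟩ := mem_powers_iff_mem_zpowers.mpr h
    exact ⟨m, finRotate_pow_apply m⟩
  · rintro ⟨c, hc⟩
    have : τ = finRotate (n + 1) ^ (c : ℕ) := Equiv.ext fun x => by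
      rw [hc, finRotate_pow_apply, Fin.cast_val_eq_self]
    exact this ▸ Subgroup.npow_mem_zpowers _ _

theorem finRotate_pow_mem_rotations {n : ℕ} (m : ℕ) : finRotate (n + 1) ^ m ∈ rotations n :=
  Subgroup.npow_mem_zpowers _ _

theorem eq_one_of_mem_rotations_of_apply_zero {n : ℕ} {τ : Perm (Fin (n + 1))}
    (hτ : τ ∈ rotations n) (h0 : τ 0 = 0) : τ = 1 := by
  obtain ⟨c, hc⟩ := mem_rotations_iff.mp hτ
  rw [hc, zero_add] at h0
  exact Equiv.ext fun x => by rw [hc, h0, add_zero, Perm.one_apply]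

theorem normalCore_rotations_eq_bot {n : ℕ} (hn : 3 ≤ n) : (rotations n).normalCore = ⊥ := by
  refine (Subgroup.eq_bot_iff_forall _).mpr fun σ hσ => ?_
  obtain ⟨c, hc⟩ := mem_rotations_iff.mp (Subgroup.normalCore_le _ hσ)
  suffices c = 0 from Equiv.ext fun x => by rw [hc, this, add_zero, Perm.one_apply]
  refine Fin.eq_zero_of_forall_perm_conj_translate hn fun τ => ?_
  obtain ⟨d, hd⟩ := mem_rotations_iff.mp (hσ τ)
  exact ⟨d, fun x => by simpa [hc] using hd (τ x)⟩

theorem ext0_apply_succ {n : ℕ} (π : Perm (Fin n)) (t : Fin n) : ext0 π t.succ = (π t).succ := by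
  simp [ext0]

theorem ext0_mul {n : ℕ} (π ρ : Perm (Fin n)) : ext0 (π * ρ) = ext0 π * ext0 ρ := by
  ext x
  cases x using Fin.cases with
  | zero => simp [ext0_zero]
  | succ t => simp [ext0_apply_succ]

theorem ext0_one (n : ℕ) : ext0 (1 : Perm (Fin n)) = 1 :=
  mul_eq_left.mp (by rw [← ext0_mul, one_mul])

theorem ext0_unext0 {n : ℕ} (τ : Perm (Fin (n + 1))) (h : τ 0 = 0) : ext0 (unext0 τ h) = τ := by
  refine Equiv.ext fun x => ?_
  cases x using Fin.cases with
  | zero => rw [ext0_zero, h]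
  | succ t => exact Fin.succ_pred _ fun h' => Fin.succ_ne_zero t (τ.injective (h'.trans h.symm))

theorem ext0_wrev (n : ℕ) : ext0 (wrev n) = Equiv.neg (Fin (n + 1)) := by
  refine Equiv.ext fun x => ?_
  cases x using Fin.cases with
  | zero => simp [ext0_zero]
  | succ t =>
    rw [ext0_apply_succ, Equiv.neg_apply, Fin.ext_iff, Fin.val_neg', Fin.val_succ, Fin.val_succ]
    simp only [wrev, Equiv.coe_fn_mk]
    rw [Nat.mod_eq_of_lt (by omega)]
    omega

noncomputable def cosetEquiv (n : ℕ) : Perm (Fin n) ≃ Perm (Fin (n + 1)) ⧸ rotations n :=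
  Equiv.ofBijective (fun π => (ext0 π : Perm (Fin (n + 1)) ⧸ rotations n)) <| by
    constructor
    · intro π ρ h
      have hmem := QuotientGroup.eq.mp h
      refine ext0_injective (inv_mul_eq_one.mp (eq_one_of_mem_rotations_of_apply_zero hmem ?_))
      rw [Perm.mul_apply, ext0_zero, Perm.inv_eq_iff_eq, ext0_zero]
    · refine QuotientGroup.mk_surjective.forall.mpr fun τ => ?_
      have h0 : (τ * finRotate (n + 1) ^ (τ⁻¹ 0 : ℕ)) 0 = 0 := by
        rw [Perm.mul_apply, finRotate_pow_apply, zero_add, Fin.cast_val_eq_self,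
          Perm.apply_inv_self]
      refine ⟨unext0 _ h0, ?_⟩
      dsimp only
      rw [ext0_unext0]
      exact QuotientGroup.mk_mul_of_mem _ (finRotate_pow_mem_rotations _)

theorem cosetEquiv_apply {n : ℕ} (π : Perm (Fin n)) :
    cosetEquiv n π = (ext0 π : Perm (Fin (n + 1)) ⧸ rotations n) := rfl

theorem exists_ext0_mul_mem_rotations {n : ℕ} (σ : Perm (Fin (n + 1))) :
    ∃ π, ∃ τ ∈ rotations n, σ = ext0 π * τ := by
  obtain ⟨π, hπ⟩ := (cosetEquiv n).surjective σ
  exact ⟨π, _, QuotientGroup.eq.mp hπ, (mul_inv_cancel_left _ _).symm⟩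

noncomputable def cosetAction (n : ℕ) : Perm (Fin (n + 1)) →* Perm (Perm (Fin n)) :=
  ((cosetEquiv n).symm.permCongrHom : _ →* _).comp
    (MulAction.toPermHom _ (Perm (Fin (n + 1)) ⧸ rotations n))

theorem cosetEquiv_cosetAction_apply {n : ℕ} (σ : Perm (Fin (n + 1))) (π : Perm (Fin n)) :
    cosetEquiv n (cosetAction n σ π) = σ • cosetEquiv n π := by
  simp [cosetAction, Equiv.permCongrHom_coe, Equiv.permCongr_apply]

theorem cosetAction_injective {n : ℕ} (hn : 3 ≤ n) : Function.Injective (cosetAction n) := by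
  rw [← MonoidHom.ker_eq_bot_iff, cosetAction, MonoidHom.ker_mulEquiv_comp,
    ← Subgroup.normalCore_eq_ker, normalCore_rotations_eq_bot hn]

theorem cosetAction_ext0 {n : ℕ} (h : Perm (Fin n)) : cosetAction n (ext0 h) = Equiv.mulLeft h :=
  Equiv.ext fun π => (cosetEquiv n).injective <| by
    rw [cosetEquiv_cosetAction_apply, cosetEquiv_apply, cosetEquiv_apply, Equiv.coe_mulLeft,
      ext0_mul]
    rfl

theorem toricMap_eq_cosetAction {n r : ℕ} (hr : r ≤ n) (π : Perm (Fin n)) :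
    toricMap n r hr π = cosetAction n (finRotate (n + 1) ^ (n + 1 - r)) π :=
  (cosetEquiv n).injective <| by
    rw [cosetEquiv_cosetAction_apply, cosetEquiv_apply, cosetEquiv_apply, toricMap, ext0_unext0,
      toricAux, QuotientGroup.mk_mul_of_mem _ (finRotate_pow_mem_rotations _)]
    rfl

theorem toricEquiv_eq_cosetAction {n : ℕ} (hn : 1 ≤ n) :
    toricEquiv n hn = (cosetAction n (finRotate (n + 1)))⁻¹ := by
  have hrot : finRotate (n + 1) ^ (n + 1) = 1 :=
    Equiv.ext fun x => by rw [finRotate_pow_apply, Fin.natCast_self, add_zero, Perm.one_apply]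
  refine Equiv.ext fun π => ?_
  rw [← map_inv, ← eq_inv_of_mul_eq_one_left ((pow_succ _ n).symm.trans hrot)]
  exact toricMap_eq_cosetAction hn π

theorem neg_mem_normalizer_rotations (n : ℕ) :
    (Equiv.neg (Fin (n + 1)) : Perm (Fin (n + 1))) ∈
      Subgroup.normalizer (rotations n : Set (Perm (Fin (n + 1)))) := by
  refine Subgroup.mem_normalizer_iff.mpr fun τ => ?_
  simp only [mem_rotations_iff, Perm.mul_apply, Perm.inv_def, Equiv.neg_symm, Equiv.neg_apply]
  constructor
  · rintro ⟨c, hc⟩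
    exact ⟨-c, fun x => by rw [hc, neg_add, neg_neg]⟩
  · rintro ⟨c, hc⟩
    exact ⟨-c, fun x => by rw [add_comm x]; simpa using congrArg Neg.neg (hc (-x))⟩

noncomputable def quotientReflection (n : ℕ) : Perm (Perm (Fin (n + 1)) ⧸ rotations n) :=
  MulAction.toPerm
    (⟨MulOpposite.op (Equiv.neg (Fin (n + 1))), neg_mem_normalizer_rotations n⟩ :
      (Subgroup.normalizer (rotations n : Set (Perm (Fin (n + 1))))).op)

theorem quotientReflection_mk {n : ℕ} (τ : Perm (Fin (n + 1))) :
    quotientReflection n τ = ((τ * Equiv.neg (Fin (n + 1)) : Perm (Fin (n + 1))) : _ ⧸ _) :=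
  rfl

theorem quotientReflection_smul {n : ℕ} (σ : Perm (Fin (n + 1)))
    (q : Perm (Fin (n + 1)) ⧸ rotations n) :
    quotientReflection n (σ • q) = σ • quotientReflection n q :=
  QuotientGroup.induction_on q fun τ => by
    rw [MulAction.Quotient.smul_mk, quotientReflection_mk, quotientReflection_mk,
      MulAction.Quotient.smul_mk, smul_eq_mul, smul_eq_mul, mul_assoc]

theorem quotientReflection_mul_self (n : ℕ) :
    quotientReflection n * quotientReflection n = 1 :=
  Equiv.ext fun q => QuotientGroup.induction_on q fun τ => by
    rw [Perm.mul_apply, quotientReflection_mk, quotientReflection_mk, mul_assoc,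
      Equiv.neg_mul_self, mul_one, Perm.one_apply]

noncomputable def cosetReflection (n : ℕ) : Perm (Perm (Fin n)) :=
  (cosetEquiv n).symm.permCongr (quotientReflection n)

theorem cosetEquiv_cosetReflection_apply {n : ℕ} (π : Perm (Fin n)) :
    cosetEquiv n (cosetReflection n π) = quotientReflection n (cosetEquiv n π) := by
  simp [cosetReflection, Equiv.permCongr_apply]

theorem cosetReflection_mul_self (n : ℕ) : cosetReflection n * cosetReflection n = 1 :=
  Equiv.ext fun π => (cosetEquiv n).injective <| by
    rw [Perm.mul_apply, cosetEquiv_cosetReflection_apply, cosetEquiv_cosetReflection_apply,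
      ← Perm.mul_apply, quotientReflection_mul_self, Perm.one_apply, Perm.one_apply]

theorem commute_cosetAction_cosetReflection {n : ℕ} (σ : Perm (Fin (n + 1))) :
    Commute (cosetAction n σ) (cosetReflection n) :=
  Equiv.ext fun π => (cosetEquiv n).injective <| by
    simp only [Perm.mul_apply, cosetEquiv_cosetAction_apply, cosetEquiv_cosetReflection_apply,
      quotientReflection_smul]

theorem cosetReflection_ne_one {n : ℕ} (hn : 2 ≤ n) : cosetReflection n ≠ 1 := by
  intro h
  have hmem : (Equiv.neg (Fin (n + 1)) : Perm (Fin (n + 1))) ∈ rotations n := by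
    have := congrArg (cosetEquiv n) (Equiv.ext_iff.mp h 1)
    rw [cosetEquiv_cosetReflection_apply, Perm.one_apply, cosetEquiv_apply, quotientReflection_mk,
      QuotientGroup.eq] at this
    simpa [ext0_one] using this
  have hneg := congrArg (· 1) (eq_one_of_mem_rotations_of_apply_zero hmem neg_zero)
  simp only [Equiv.neg_apply, Perm.one_apply] at hneg
  obtain ⟨m, rfl⟩ : ∃ m, n = m + 2 := ⟨n - 2, by omega⟩
  have := Fin.two_mul_val_of_add_self_eq_zero (by rw [← neg_eq_iff_add_eq_zero, hneg]) one_ne_zero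
  simp at this

theorem revEquiv_eq_cosetAction_mul (n : ℕ) :
    revEquiv n = cosetAction n (Equiv.neg (Fin (n + 1))) * cosetReflection n :=
  Equiv.ext fun π => (cosetEquiv n).injective <| by
    rw [Perm.mul_apply, cosetEquiv_cosetAction_apply, cosetEquiv_cosetReflection_apply,
      cosetEquiv_apply, cosetEquiv_apply, quotientReflection_mk, MulAction.Quotient.smul_mk,
      smul_eq_mul, revEquiv, Equiv.coe_fn_mk, revMap, ext0_mul, ext0_mul, ext0_wrev, mul_assoc]

theorem cosetAction_mul_cosetReflection_ne_one {n : ℕ} (hn : 3 ≤ n) (σ : Perm (Fin (n + 1))) :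
    cosetAction n σ * cosetReflection n ≠ 1 := by
  intro h
  have hB : cosetAction n σ = cosetReflection n := by
    rw [eq_inv_of_mul_eq_one_left h, inv_eq_of_mul_eq_one_right (cosetReflection_mul_self n)]
  -- `cosetReflection` commutes with the whole action, so `σ` is central
  have hσ : σ = 1 := Perm.eq_one_of_forall_commute (by rw [Fintype.card_fin]; omega) fun ρ =>
    cosetAction_injective hn <| by
      rw [map_mul, map_mul, hB, (commute_cosetAction_cosetReflection ρ).eq]
  exact cosetReflection_ne_one (n := n) (by omega) (by rw [← hB, hσ, map_one])

noncomputable def actionHom (n : ℕ) :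
    Perm (Fin (n + 1)) × Multiplicative (ZMod 2) →* Perm (Perm (Fin n)) :=
  MonoidHom.noncommCoprod (cosetAction n)
    (zmodTwoHom (cosetReflection n) (cosetReflection_mul_self n)) fun σ ε => by
      rcases Multiplicative.zmod_two_eq_one_or_ofAdd_one ε with rfl | rfl
      · rw [map_one]
        exact Commute.one_right _
      · rw [zmodTwoHom_ofAdd_one]
        exact commute_cosetAction_cosetReflection σ

theorem actionHom_apply_one {n : ℕ} (σ : Perm (Fin (n + 1))) :
    actionHom n (σ, 1) = cosetAction n σ := by
  simp [actionHom]

theorem actionHom_apply_ofAdd_one {n : ℕ} (σ : Perm (Fin (n + 1))) :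
    actionHom n (σ, Multiplicative.ofAdd 1) = cosetAction n σ * cosetReflection n := by
  rw [actionHom, MonoidHom.noncommCoprod_apply, zmodTwoHom_ofAdd_one]

theorem actionHom_injective {n : ℕ} (hn : 3 ≤ n) : Function.Injective (actionHom n) := by
  refine (injective_iff_map_eq_one _).mpr fun ⟨σ, ε⟩ h => ?_
  rcases Multiplicative.zmod_two_eq_one_or_ofAdd_one ε with rfl | rfl
  · rw [actionHom_apply_one, ← map_one (cosetAction n)] at h
    rw [cosetAction_injective hn h]
    rfl
  · rw [actionHom_apply_ofAdd_one] at h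
    exact absurd h (cosetAction_mul_cosetReflection_ne_one hn σ)

theorem cosetAction_mem_toricReverseGroup {n : ℕ} (hn : 1 ≤ n) {τ : Perm (Fin (n + 1))}
    (hτ : τ ∈ rotations n) : cosetAction n τ ∈ toricReverseGroup n hn := by
  obtain ⟨k, rfl⟩ := Subgroup.mem_zpowers_iff.mp hτ
  rw [map_zpow]
  refine zpow_mem ?_ k
  rw [← inv_inv (cosetAction n _), ← toricEquiv_eq_cosetAction hn]
  exact inv_mem (Subgroup.subset_closure (Set.mem_insert _ _))

theorem toricReverseGroup_le_range_actionHom {n : ℕ} (hn : 1 ≤ n) :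
    toricReverseGroup n hn ≤ (actionHom n).range := by
  rw [toricReverseGroup, Subgroup.closure_le, Set.insert_subset_iff, Set.singleton_subset_iff]
  constructor
  · exact ⟨((finRotate (n + 1))⁻¹, 1), by
      rw [actionHom_apply_one, map_inv, toricEquiv_eq_cosetAction hn]⟩
  · exact ⟨(Equiv.neg (Fin (n + 1)), Multiplicative.ofAdd 1), by
      rw [actionHom_apply_ofAdd_one, revEquiv_eq_cosetAction_mul]⟩

theorem mem_range_actionHom_iff {n : ℕ} (hn : 1 ≤ n) (e : Perm (Perm (Fin n))) :
    e ∈ (actionHom n).range ↔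
      ∃ h d, d ∈ toricReverseGroup n hn ∧ e = Equiv.mulLeft h * d := by
  constructor
  · rintro ⟨⟨σ, ε⟩, rfl⟩
    rcases Multiplicative.zmod_two_eq_one_or_ofAdd_one ε with rfl | rfl
    · obtain ⟨π, τ, hτ, rfl⟩ := exists_ext0_mul_mem_rotations σ
      refine ⟨π, cosetAction n τ, cosetAction_mem_toricReverseGroup hn hτ, ?_⟩
      rw [actionHom_apply_one, map_mul, cosetAction_ext0]
    · obtain ⟨π, τ, hτ, hσ⟩ := exists_ext0_mul_mem_rotations (σ * Equiv.neg (Fin (n + 1)))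
      refine ⟨π, cosetAction n τ * revEquiv n,
        mul_mem (cosetAction_mem_toricReverseGroup hn hτ) (Subgroup.subset_closure (by simp)), ?_⟩
      rw [actionHom_apply_ofAdd_one, revEquiv_eq_cosetAction_mul, ← mul_assoc, ← mul_assoc,
        ← cosetAction_ext0, ← map_mul, ← map_mul, ← hσ, mul_assoc, Equiv.neg_mul_self, mul_one]
  · rintro ⟨h, d, hd, rfl⟩
    exact mul_mem ⟨(ext0 h, 1), by rw [actionHom_apply_one, cosetAction_ext0]⟩
      (toricReverseGroup_le_range_actionHom hn hd)

/-- For `n ≥ 3`, the set `{L_h ∘ d : h ∈ Sym_n, d ∈ D_{n+1}}` is a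
subgroup of the symmetric group on the set `Sym_n`, isomorphic to the direct product
of `Sym_{n+1}` by a cyclic group of order `2`. -/
theorem stmt_9 (n : ℕ) (hn : 3 ≤ n) :
    ∃ H : Subgroup (Equiv.Perm (Equiv.Perm (Fin n))),
      ((H : Set (Equiv.Perm (Equiv.Perm (Fin n))))
          = {e | ∃ (h : Equiv.Perm (Fin n)) (d : Equiv.Perm (Equiv.Perm (Fin n))),
              d ∈ toricReverseGroup n (by omega) ∧ e = Equiv.mulLeft h * d}) ∧
      Nonempty (H ≃* Equiv.Perm (Fin (n + 1)) × Multiplicative (ZMod 2)) :=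
  ⟨(actionHom n).range, Set.ext (mem_range_actionHom_iff (by omega)),
    ⟨(MonoidHom.ofInjective (actionHom_injective hn)).symm⟩⟩
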